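/- arXiv:2103.00932 — 2 statements merged into one kernel-verified Lean document; each statement's English description precedes it below -/
import Mathlib

section
/- Let q be a nonzero polynomial over ℂ, let z_0 ∈ ℂ and ρ > 0, and assume q has no root on the circle { z : |z − z_0| = ρ }. Let γ : [0,1] → ℂ be the loop γ(t) = z_0 + ρ·exp(2πi t), and let f : [0,1] → ℂ be a continuous function with f(t)² = q(γ(t)) for all t ∈ [0,1]. Then f(1) = (−1)^N · f(0), where N is the number of roots of q, counted with multiplicity, lying in the open disc { z : |z − z_0| < ρ }. -/
/-!
Factor `q(γ t) = c ∏ (γ t - r)` over the roots `r` of `q`. Each factor has an explicit continuous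
square root along the loop: for `r` outside the disc, `γ t - r = (z₀ - r)(1 + w t)` with `‖w t‖ < 1`,
so principal square roots give a `1`-periodic branch; for `r` inside,
`γ t - r = (√ρ e^{πit})² (1 + w t)` with `‖w t‖ < 1`, and the factor `e^{πit}` changes sign from
`t = 0` to `t = 1`. The product `g` is therefore a continuous square root of `q ∘ γ` with
`g 1 = (-1)^N g 0`. Any other continuous square root `f` satisfies `(f / g)² = 1`, so `f / g` is
constant on the connected interval `[0, 1]`.
-/

open Complex Polynomial

theorem IsPreconnected.div_eq_div_of_sq_eq_sq {X 𝕜 : Type*} [TopologicalSpace X] [NormedField 𝕜]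
    {S : Set X} (hS : IsPreconnected S) {f g : X → 𝕜} (hf : ContinuousOn f S)
    (hg : ContinuousOn g S) (hg₀ : ∀ x ∈ S, g x ≠ 0) (hfg : ∀ x ∈ S, f x ^ 2 = g x ^ 2)
    {x y : X} (hx : x ∈ S) (hy : y ∈ S) : f x / g x = f y / g y := by
  refine hS.constant_of_mapsTo (T := {1, -1}) (Set.toFinite _).isDiscrete (hf.div hg hg₀)
    (fun z hz => ?_) hx hy
  rw [Set.mem_insert_iff, Set.mem_singleton_iff, ← sq_eq_one_iff, Pi.div_apply, div_pow, hfg z hz,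
    div_self (pow_ne_zero 2 (hg₀ z hz))]

theorem continuous_one_add_cpow_inv_two {X : Type*} [TopologicalSpace X] {w : X → ℂ}
    (hw : Continuous w) (hw₁ : ∀ x, ‖w x‖ < 1) : Continuous fun x => (1 + w x) ^ (2⁻¹ : ℂ) :=
  (continuous_const.add hw).cpow continuous_const fun x => mem_slitPlane_of_norm_lt_one (hw₁ x)

theorem norm_exp_two_pi_I_mul (t : ℝ) : ‖exp (2 * Real.pi * I * t)‖ = 1 := by
  rw [show 2 * Real.pi * I * t = ((2 * Real.pi * t : ℝ) : ℂ) * I by push_cast; ring]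
  exact norm_exp_ofReal_mul_I _

noncomputable def circleLoop (z₀ : ℂ) (ρ : ℝ) (t : ℝ) : ℂ :=
  z₀ + ρ * exp (2 * Real.pi * I * t)

theorem norm_circleLoop_sub {z₀ : ℂ} {ρ : ℝ} (hρ : 0 ≤ ρ) (t : ℝ) :
    ‖circleLoop z₀ ρ t - z₀‖ = ρ := by
  rw [circleLoop, add_sub_cancel_left, norm_mul, norm_exp_two_pi_I_mul, mul_one, norm_real,
    Real.norm_of_nonneg hρ]

theorem exists_sqrt_circleLoop_sub_of_lt {z₀ r : ℂ} {ρ : ℝ} (hr : ‖r - z₀‖ < ρ) :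
    ∃ s : ℝ → ℂ, Continuous s ∧ (∀ t, s t ^ 2 = circleLoop z₀ ρ t - r) ∧ s 1 = -s 0 := by
  have hρ : 0 < ρ := (norm_nonneg _).trans_lt hr
  set w : ℝ → ℂ := fun t => (z₀ - r) / ρ * exp (-(2 * Real.pi * I * t))
  have hw₁ (t : ℝ) : ‖w t‖ < 1 := by
    rw [norm_mul, exp_neg, norm_inv, norm_exp_two_pi_I_mul, inv_one, mul_one, norm_div, norm_real,
      Real.norm_of_nonneg hρ.le, norm_sub_rev, div_lt_one hρ]
    exact hr
  refine ⟨fun t => Real.sqrt ρ * exp (Real.pi * I * t) * (1 + w t) ^ (2⁻¹ : ℂ),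
    (continuous_const.mul (by fun_prop)).mul
      (continuous_one_add_cpow_inv_two (by fun_prop) hw₁), fun t => ?_, ?_⟩
  · have hsqrt : ((Real.sqrt ρ : ℝ) : ℂ) ^ 2 = ρ := by
      rw [← ofReal_pow, Real.sq_sqrt hρ.le]
    have hexp : exp (Real.pi * I * t) ^ 2 = exp (2 * Real.pi * I * t) := by
      rw [← exp_nat_mul]; ring_nf
    have hρ₀ : (ρ : ℂ) ≠ 0 := ofReal_ne_zero.2 hρ.ne'
    simp only [w, mul_pow, cpow_ofNat_inv_pow, hsqrt, hexp, exp_neg, circleLoop]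
    field_simp [exp_ne_zero]
    ring
  · simp [w, exp_pi_mul_I, exp_neg, exp_two_pi_mul_I]

theorem exists_sqrt_circleLoop_sub_of_gt {z₀ r : ℂ} {ρ : ℝ} (hρ : 0 ≤ ρ) (hr : ρ < ‖r - z₀‖) :
    ∃ s : ℝ → ℂ, Continuous s ∧ (∀ t, s t ^ 2 = circleLoop z₀ ρ t - r) ∧ s 1 = s 0 := by
  have hr₀ : 0 < ‖z₀ - r‖ := norm_sub_rev r z₀ ▸ hρ.trans_lt hr
  set w : ℝ → ℂ := fun t => ρ / (z₀ - r) * exp (2 * Real.pi * I * t)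
  have hw₁ (t : ℝ) : ‖w t‖ < 1 := by
    rw [norm_mul, norm_exp_two_pi_I_mul, mul_one, norm_div, norm_real,
      Real.norm_of_nonneg hρ, div_lt_one hr₀, norm_sub_rev]
    exact hr
  refine ⟨fun t => (z₀ - r) ^ (2⁻¹ : ℂ) * (1 + w t) ^ (2⁻¹ : ℂ),
    continuous_const.mul (continuous_one_add_cpow_inv_two (by fun_prop) hw₁), fun t => ?_, ?_⟩
  · have hr₀' : z₀ - r ≠ 0 := norm_pos_iff.1 hr₀
    simp only [w, mul_pow, cpow_ofNat_inv_pow, circleLoop]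
    field_simp
    ring
  · simp [w, exp_two_pi_mul_I]

theorem exists_sqrt_prod_circleLoop_sub {z₀ : ℂ} {ρ : ℝ} (hρ : 0 ≤ ρ) (m : Multiset ℂ)
    (hm : ∀ r ∈ m, ‖r - z₀‖ ≠ ρ) :
    ∃ s : ℝ → ℂ, Continuous s ∧ (∀ t, s t ^ 2 = (m.map fun r => circleLoop z₀ ρ t - r).prod) ∧
      s 1 = (-1) ^ Multiset.card (m.filter fun r => ‖r - z₀‖ < ρ) * s 0 := by
  induction m using Multiset.induction_on with
  | empty => exact ⟨1, continuous_const, by simp, by simp⟩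
  | cons r m ih =>
    obtain ⟨s, hs, hs_sq, hs_one⟩ := ih fun r' hr' => hm r' (Multiset.mem_cons_of_mem hr')
    have hr := hm r (Multiset.mem_cons_self r m)
    obtain hin | hout := hr.lt_or_gt
    · obtain ⟨s', hs', hs'_sq, hs'_one⟩ := exists_sqrt_circleLoop_sub_of_lt hin
      refine ⟨s' * s, hs'.mul hs, fun t => by simp [mul_pow, hs_sq, hs'_sq], ?_⟩
      rw [Pi.mul_apply, Pi.mul_apply, hs_one, hs'_one,
        Multiset.filter_cons_of_pos (p := fun r => ‖r - z₀‖ < ρ) m hin, Multiset.card_cons,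
        pow_succ]
      ring
    · obtain ⟨s', hs', hs'_sq, hs'_one⟩ := exists_sqrt_circleLoop_sub_of_gt hρ hout
      refine ⟨s' * s, hs'.mul hs, fun t => by simp [mul_pow, hs_sq, hs'_sq], ?_⟩
      rw [Pi.mul_apply, Pi.mul_apply, hs_one, hs'_one,
        Multiset.filter_cons_of_neg (p := fun r => ‖r - z₀‖ < ρ) m hout.not_gt]
      ring

theorem exists_sqrt_eval_circleLoop (q : ℂ[X]) {z₀ : ℂ} {ρ : ℝ} (hρ : 0 ≤ ρ)
    (hcirc : ∀ z : ℂ, ‖z - z₀‖ = ρ → q.eval z ≠ 0) :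
    ∃ g : ℝ → ℂ, Continuous g ∧ (∀ t, g t ^ 2 = q.eval (circleLoop z₀ ρ t)) ∧
      g 1 = (-1) ^ Multiset.card (q.roots.filter fun r => ‖r - z₀‖ < ρ) * g 0 := by
  obtain ⟨s, hs, hs_sq, hs_one⟩ := exists_sqrt_prod_circleLoop_sub hρ q.roots
    fun r hr hr_circ => hcirc r hr_circ (mem_roots'.1 hr).2
  refine ⟨fun t => q.leadingCoeff ^ (2⁻¹ : ℂ) * s t, continuous_const.mul hs, fun t => ?_, ?_⟩
  · rw [mul_pow, cpow_ofNat_inv_pow, hs_sq, (IsAlgClosed.splits q).eval_eq_prod_roots]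
  · simp only [hs_one]
    ring

theorem stmt3_general (q : Polynomial ℂ) (z₀ : ℂ) (ρ : ℝ) (hρ : 0 < ρ)
    (hcirc : ∀ z : ℂ, ‖z - z₀‖ = ρ → Polynomial.eval z q ≠ 0)
    (f : ℝ → ℂ) (hf : ContinuousOn f (Set.Icc 0 1))
    (hsq : ∀ t ∈ Set.Icc (0 : ℝ) 1,
      f t ^ 2 =
        Polynomial.eval (z₀ + (ρ : ℂ) * Complex.exp (2 * Real.pi * Complex.I * t)) q) :
    f 1 =
      (-1 : ℂ) ^
          Multiset.card (q.roots.filter fun z => ‖z - z₀‖ < ρ) *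
        f 0 := by
  obtain ⟨g, hg, hg_sq, hg_one⟩ := exists_sqrt_eval_circleLoop q hρ.le hcirc
  have hg₀ (t : ℝ) : g t ≠ 0 := fun h =>
    hcirc _ (norm_circleLoop_sub hρ.le t) (by rw [← hg_sq, h, zero_pow two_ne_zero])
  have hratio : f 0 / g 0 = f 1 / g 1 :=
    isPreconnected_Icc.div_eq_div_of_sq_eq_sq hf hg.continuousOn (fun t _ => hg₀ t)
      (fun t ht => (hsq t ht).trans (hg_sq t).symm) (Set.left_mem_Icc.2 zero_le_one)
      (Set.right_mem_Icc.2 zero_le_one)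
  rw [div_eq_div_iff (hg₀ 0) (hg₀ 1), hg_one] at hratio
  exact mul_right_cancel₀ (hg₀ 0) (by linear_combination -hratio)

/-- Let `q` be a nonzero complex polynomial with no root on the circle
of radius `ρ` about `z₀`, let `γ t = z₀ + ρ·exp(2πi t)`, and let `f` be a continuous
square root of `q ∘ γ` on `[0,1]`. Then `f 1 = (−1)^N · f 0`, where `N` is the number of
roots of `q` (with multiplicity) in the open disc of radius `ρ` about `z₀`. -/
theorem stmt3 (q : Polynomial ℂ) (hq : q ≠ 0) (z₀ : ℂ) (ρ : ℝ) (hρ : 0 < ρ)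
    (hcirc : ∀ z : ℂ, ‖z - z₀‖ = ρ → Polynomial.eval z q ≠ 0)
    (f : ℝ → ℂ) (hf : ContinuousOn f (Set.Icc 0 1))
    (hsq : ∀ t ∈ Set.Icc (0 : ℝ) 1,
      f t ^ 2 =
        Polynomial.eval (z₀ + (ρ : ℂ) * Complex.exp (2 * Real.pi * Complex.I * t)) q) :
    f 1 =
      (-1 : ℂ) ^
          Multiset.card (q.roots.filter fun z => ‖z - z₀‖ < ρ) *
        f 0 :=
  stmt3_general q z₀ ρ hρ hcirc f hf hsq
end

section
/- Let r > 0 and υ ∈ ℝ with 0 < υ ≤ 8, and let B : ℝ → ℂ be a function satisfying B(R)·(Rr)^{1/4}·e^{8√(Rr)} → i√π as R → ∞. Set C(R) = υ√(Rr), let N(R) = [[−C(R), B(R)],[B(R), C(R)]], let A = (3πi/2)·I, let T = [[0,1],[1,0]], and define M(R) = T · exp(−(A + N(R))) (matrix exponential). Then, as R → ∞: the diagonal entries M(R)₁₁ and M(R)₂₂ tend to 0, M(R)₁₂ · e^{υ√(Rr)} → i, and M(R)₂₁ · e^{−υ√(Rr)} → i. -/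
/-!
Since `a • 1` is central, `exp (-(a • 1 + N)) = exp (-a) • exp (-N)`, and `N = !![-c, b; b, c]`
squares to `μ² • 1` with `μ² = c² + b²`, so the exponential series collapses to
`exp (-N) = cosh μ • 1 - (sinh μ / μ) • N`. For the square root with `Re μ ≥ 0` we have
`μ - c = b² / (μ + c) = O(b² / c)`, so `b e^c → 0` forces `(μ - c) e^{2c} → 0`. The entries of `M`
are then read off from `cosh μ ∓ sinh μ = e^{∓μ}`, and `exp (-3πi/2) = i`.
-/

open Filter Topology
open scoped Nat

namespace NormedSpace

variable {A : Type*} [Ring A] [Algebra ℂ A]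
    [TopologicalSpace A] [IsTopologicalRing A] [T2Space A] [ContinuousSMul ℂ A]

theorem exp_eq_cosh_smul_one_add_sinh_div_smul {x : A} {μ : ℂ} (hμ : μ ≠ 0)
    (hx : x * x = μ ^ 2 • (1 : A)) :
    exp x = Complex.cosh μ • (1 : A) + (Complex.sinh μ / μ) • x := by
  have hpow_even (k : ℕ) : x ^ (2 * k) = μ ^ (2 * k) • (1 : A) := by
    rw [pow_mul, sq, hx, smul_pow, one_pow, ← pow_mul]
  have hpow_odd (k : ℕ) : x ^ (2 * k + 1) = μ ^ (2 * k) • x := by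
    rw [pow_succ, hpow_even, smul_mul_assoc, one_mul]
  have heven : HasSum (fun k => ((2 * k)! : ℂ)⁻¹ • x ^ (2 * k)) (Complex.cosh μ • (1 : A)) := by
    have := (Complex.hasSum_cosh μ).smul_const (1 : A)
    refine this.congr_fun fun k => ?_
    rw [hpow_even, smul_smul, div_eq_inv_mul]
  have hodd : HasSum (fun k => ((2 * k + 1)! : ℂ)⁻¹ • x ^ (2 * k + 1))
      ((Complex.sinh μ / μ) • x) := by
    have := ((Complex.hasSum_sinh μ).div_const μ).smul_const x
    refine this.congr_fun fun k => ?_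
    rw [hpow_odd, smul_smul, pow_succ]
    congr 1
    field_simp
  rw [exp_eq_tsum ℂ]
  exact (HasSum.even_add_odd (f := fun n => (n ! : ℂ)⁻¹ • x ^ n) heven hodd).tsum_eq

theorem exp_smul_one (s : ℂ) : exp (s • (1 : A)) = Complex.exp s • (1 : A) := by
  have := (exp_series_hasSum_exp' (𝕂 := ℂ) s).smul_const (1 : A)
  rw [exp_eq_tsum ℂ, Complex.exp_eq_exp_ℂ, ← this.tsum_eq]
  simp_rw [smul_pow, one_pow, smul_smul, smul_eq_mul]

end NormedSpace

open Complex NormedSpace in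
theorem Matrix.swap_mul_exp_neg_smul_one_add {a b c μ : ℂ} (hμ : μ ≠ 0)
    (hμsq : μ ^ 2 = c ^ 2 + b ^ 2) :
    !![0, 1; 1, 0] * exp (-(a • (1 : Matrix (Fin 2) (Fin 2) ℂ) + !![-c, b; b, c])) =
      Complex.exp (-a) • !![-(b * (sinh μ / μ)), cosh μ - c * (sinh μ / μ);
        cosh μ + c * (sinh μ / μ), -(b * (sinh μ / μ))] := by
  have hsq : -!![-c, b; b, c] * -!![-c, b; b, c] = μ ^ 2 • (1 : Matrix (Fin 2) (Fin 2) ℂ) := by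
    rw [hμsq]
    ext i j
    fin_cases i <;> fin_cases j <;> simp [sq] <;> ring
  rw [neg_add, ← neg_smul, exp_add_of_commute _ _ ((Commute.one_left _).smul_left _),
    exp_smul_one, smul_one_mul, exp_eq_cosh_smul_one_add_sinh_div_smul hμ hsq]
  ext i j
  fin_cases i <;> fin_cases j <;> simp [Matrix.mul_apply, Fin.sum_univ_two] <;> ring

theorem Complex.exists_sq_eq_re_nonneg (z : ℂ) : ∃ μ : ℂ, μ ^ 2 = z ∧ 0 ≤ μ.re := by
  obtain ⟨μ, hμ⟩ := IsAlgClosed.exists_pow_nat_eq z two_pos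
  rcases le_total 0 μ.re with h | h
  · exact ⟨μ, hμ, h⟩
  · exact ⟨-μ, by rw [neg_sq, hμ], by simpa using h⟩

theorem Complex.norm_sub_ofReal_le_of_sq_eq {c : ℝ} {b μ : ℂ} (hc : 0 < c)
    (hμ : μ ^ 2 = c ^ 2 + b ^ 2) (hre : 0 ≤ μ.re) : ‖μ - c‖ ≤ ‖b‖ ^ 2 / c := by
  have hsum : c ≤ ‖μ + c‖ := by
    calc c ≤ (μ + c).re := by simpa using hre
      _ ≤ ‖μ + c‖ := Complex.re_le_norm _
  have hprod : ‖μ - c‖ * ‖μ + c‖ = ‖b‖ ^ 2 := by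
    rw [← norm_mul, ← norm_pow]
    congr 1
    linear_combination hμ
  rw [le_div_iff₀ hc, ← hprod]
  gcongr

section Asymptotics

variable {α : Type*} {l : Filter α} {c : α → ℝ} {b μ : α → ℂ}

theorem tendsto_sub_mul_exp_two_mul (hc : Tendsto c l atTop)
    (hb : Tendsto (fun x => ‖b x‖ * Real.exp (c x)) l (𝓝 0))
    (hμ : ∀ x, μ x ^ 2 = c x ^ 2 + b x ^ 2) (hre : ∀ x, 0 ≤ (μ x).re) :
    Tendsto (fun x => (μ x - c x) * Complex.exp (2 * c x)) l (𝓝 0) := by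
  refine squeeze_zero_norm' ?_ (by simpa using hb.pow 2)
  filter_upwards [hc.eventually_ge_atTop 1] with x hx
  have hδ := Complex.norm_sub_ofReal_le_of_sq_eq (by linarith) (hμ x) (hre x)
  have hre2 : (2 * (c x : ℂ)).re = 2 * c x := by simp
  rw [norm_mul, Complex.norm_exp, hre2, mul_pow, ← Real.exp_nat_mul]
  push_cast
  calc ‖μ x - c x‖ * Real.exp (2 * c x) ≤ ‖b x‖ ^ 2 / c x * Real.exp (2 * c x) := by gcongr
    _ ≤ ‖b x‖ ^ 2 * Real.exp (2 * c x) := by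
      gcongr
      exact div_le_self (by positivity) hx

theorem tendsto_sinh_mul_exp_neg (hc : Tendsto c l atTop)
    (hδ : Tendsto (fun x => μ x - c x) l (𝓝 0)) :
    Tendsto (fun x => Complex.sinh (μ x) * Complex.exp (-c x)) l (𝓝 (1 / 2)) := by
  have hexp : Tendsto (fun x => Complex.exp (-(2 * c x))) l (𝓝 0) := by
    refine squeeze_zero_norm (fun x => le_of_eq ?_)
      (Real.tendsto_exp_atBot.comp (tendsto_neg_atTop_atBot.comp (hc.const_mul_atTop two_pos)))
    simp [Complex.norm_exp]
  have := (hδ.cexp.sub ((hδ.neg.cexp).mul hexp)).div_const 2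
  rw [Complex.exp_zero, neg_zero, Complex.exp_zero, one_mul, sub_zero] at this
  refine this.congr fun x => ?_
  generalize μ x = m
  obtain ⟨d, rfl⟩ : ∃ d, m = c x + d := ⟨m - c x, by ring⟩
  simp only [Complex.sinh, add_sub_cancel_left, neg_add, Complex.exp_add, Complex.exp_neg,
    two_mul]
  field_simp

theorem tendsto_sub_mul_sinh_mul_exp
    (hδ : Tendsto (fun x => μ x - c x) l (𝓝 0))
    (hδ₂ : Tendsto (fun x => (μ x - c x) * Complex.exp (2 * c x)) l (𝓝 0)) :
    Tendsto (fun x => (μ x - c x) * Complex.sinh (μ x) * Complex.exp (c x)) l (𝓝 0) := by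
  have := ((hδ₂.mul hδ.cexp).sub (hδ.mul hδ.neg.cexp)).div_const 2
  rw [zero_mul, zero_mul, sub_zero, zero_div] at this
  refine this.congr fun x => ?_
  generalize μ x = m
  obtain ⟨d, rfl⟩ : ∃ d, m = c x + d := ⟨m - c x, by ring⟩
  simp only [Complex.sinh, add_sub_cancel_left, neg_add, Complex.exp_add, Complex.exp_neg,
    two_mul]
  field_simp

theorem tendsto_norm_atTop_of_sub_tendsto_zero (hc : Tendsto c l atTop)
    (hδ : Tendsto (fun x => μ x - c x) l (𝓝 0)) :
    Tendsto (fun x => ‖μ x‖) l atTop := by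
  refine tendsto_atTop_mono (fun x => ?_) (hc.atTop_add hδ.norm.neg)
  have := norm_sub_norm_le (c x : ℂ) (c x - μ x)
  rw [sub_sub_cancel, Complex.norm_real, Real.norm_eq_abs, norm_sub_rev] at this
  linarith [le_abs_self (c x)]

theorem tendsto_mul_sinh_div (hc : Tendsto c l atTop)
    (hb : Tendsto (fun x => ‖b x‖ * Real.exp (c x)) l (𝓝 0))
    (hδ : Tendsto (fun x => μ x - c x) l (𝓝 0)) (hinv : Tendsto (fun x => (μ x)⁻¹) l (𝓝 0)) :
    Tendsto (fun x => b x * (Complex.sinh (μ x) / μ x)) l (𝓝 0) := by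
  have hbe : Tendsto (fun x => b x * Complex.exp (c x)) l (𝓝 0) := by
    rw [tendsto_zero_iff_norm_tendsto_zero]
    simpa [Complex.norm_exp] using hb
  have := (hbe.mul (tendsto_sinh_mul_exp_neg hc hδ)).mul hinv
  rw [zero_mul, zero_mul] at this
  refine this.congr fun x => ?_
  rw [Complex.exp_neg]
  field_simp

theorem tendsto_cosh_sub_mul_sinh_div_mul_exp (hδ : Tendsto (fun x => μ x - c x) l (𝓝 0))
    (hδ₂ : Tendsto (fun x => (μ x - c x) * Complex.exp (2 * c x)) l (𝓝 0))
    (hμ0 : ∀ᶠ x in l, μ x ≠ 0) (hinv : Tendsto (fun x => (μ x)⁻¹) l (𝓝 0)) :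
    Tendsto (fun x => (Complex.cosh (μ x) - c x * (Complex.sinh (μ x) / μ x)) *
      Complex.exp (c x)) l (𝓝 1) := by
  have := hδ.neg.cexp.add ((tendsto_sub_mul_sinh_mul_exp hδ hδ₂).mul hinv)
  rw [neg_zero, Complex.exp_zero, zero_mul, add_zero] at this
  refine this.congr' (hμ0.mono fun x hx => ?_)
  simp only [Complex.cosh, Complex.sinh, neg_sub, Complex.exp_sub, Complex.exp_neg]
  field_simp
  ring

theorem tendsto_cosh_add_mul_sinh_div_mul_exp_neg (hc : Tendsto c l atTop)
    (hδ : Tendsto (fun x => μ x - c x) l (𝓝 0))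
    (hμ0 : ∀ᶠ x in l, μ x ≠ 0) (hinv : Tendsto (fun x => (μ x)⁻¹) l (𝓝 0)) :
    Tendsto (fun x => (Complex.cosh (μ x) + c x * (Complex.sinh (μ x) / μ x)) *
      Complex.exp (-c x)) l (𝓝 1) := by
  have := hδ.cexp.sub ((hδ.mul (tendsto_sinh_mul_exp_neg hc hδ)).mul hinv)
  rw [Complex.exp_zero, zero_mul, zero_mul, sub_zero] at this
  refine this.congr' (hμ0.mono fun x hx => ?_)
  simp only [Complex.cosh, Complex.sinh, Complex.exp_sub, Complex.exp_neg]
  field_simp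
  ring

end Asymptotics

theorem tendsto_swap_mul_exp_neg_entries {α : Type*} {l : Filter α} {c : α → ℝ} {b : α → ℂ}
    (a : ℂ) (hc : Tendsto c l atTop) (hb : Tendsto (fun x => ‖b x‖ * Real.exp (c x)) l (𝓝 0))
    {M : α → Matrix (Fin 2) (Fin 2) ℂ}
    (hM : ∀ x, M x = !![0, 1; 1, 0] * NormedSpace.exp
      (-(a • (1 : Matrix (Fin 2) (Fin 2) ℂ) + !![-(c x : ℂ), b x; b x, (c x : ℂ)]))) :
    Tendsto (fun x => M x 0 0) l (𝓝 0) ∧ Tendsto (fun x => M x 1 1) l (𝓝 0) ∧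
    Tendsto (fun x => M x 0 1 * Real.exp (c x)) l (𝓝 (Complex.exp (-a))) ∧
    Tendsto (fun x => M x 1 0 * Real.exp (-c x)) l (𝓝 (Complex.exp (-a))) := by
  -- the root with nonnegative real part is the one close to `c`
  choose μ hμ hre using fun x => Complex.exists_sq_eq_re_nonneg ((c x : ℂ) ^ 2 + b x ^ 2)
  have hδ₂ := tendsto_sub_mul_exp_two_mul hc hb hμ hre
  have hδ : Tendsto (fun x => μ x - c x) l (𝓝 0) := by
    refine squeeze_zero_norm' ?_ (tendsto_zero_iff_norm_tendsto_zero.1 hδ₂)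
    filter_upwards [hc.eventually_ge_atTop 0] with x hx
    rw [norm_mul]
    refine le_mul_of_one_le_right (norm_nonneg _) ?_
    simpa [Complex.norm_exp] using hx
  have hnorm := tendsto_norm_atTop_of_sub_tendsto_zero hc hδ
  have hinv : Tendsto (fun x => (μ x)⁻¹) l (𝓝 0) :=
    tendsto_inv₀_cobounded.comp (tendsto_norm_atTop_iff_cobounded.1 hnorm)
  have hμ0 : ∀ᶠ x in l, μ x ≠ 0 :=
    (hnorm.eventually_gt_atTop 0).mono fun x hx => norm_pos_iff.1 hx
  have hM' := hμ0.mono fun x hx => (hM x).trans (Matrix.swap_mul_exp_neg_smul_one_add hx (hμ x))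
  refine ⟨?_, ?_, ?_, ?_⟩
  · simpa using ((tendsto_mul_sinh_div hc hb hδ hinv).neg.const_mul (Complex.exp (-a))).congr'
      (hM'.mono fun x hx => by simp [hx])
  · simpa using ((tendsto_mul_sinh_div hc hb hδ hinv).neg.const_mul (Complex.exp (-a))).congr'
      (hM'.mono fun x hx => by simp [hx])
  · simpa using ((tendsto_cosh_sub_mul_sinh_div_mul_exp hδ hδ₂ hμ0 hinv).const_mul
      (Complex.exp (-a))).congr' (hM'.mono fun x hx => by simp [hx, mul_assoc])
  · simpa using ((tendsto_cosh_add_mul_sinh_div_mul_exp_neg hc hδ hμ0 hinv).const_mul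
      (Complex.exp (-a))).congr' (hM'.mono fun x hx => by simp [hx, mul_assoc])

theorem tendsto_zero_of_tendsto_mul_of_tendsto_norm_atTop {α 𝕜 : Type*} [NormedField 𝕜]
    {l : Filter α} {f g : α → 𝕜} {L : 𝕜} (h : Tendsto (fun x => f x * g x) l (𝓝 L))
    (hg : Tendsto (fun x => ‖g x‖) l atTop) : Tendsto f l (𝓝 0) := by
  have := h.mul (tendsto_inv₀_cobounded.comp (tendsto_norm_atTop_iff_cobounded.1 hg))
  rw [mul_zero] at this
  refine this.congr' ((hg.eventually_gt_atTop 0).mono fun x hx => ?_)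
  rw [Function.comp_apply, mul_inv_cancel_right₀ (norm_pos_iff.1 hx)]

theorem Complex.exp_neg_three_pi_mul_I_div_two :
    Complex.exp (-(3 * Real.pi * Complex.I / 2)) = Complex.I := by
  rw [show -(3 * Real.pi * Complex.I / 2) = Real.pi / 2 * Complex.I - 2 * Real.pi * Complex.I by
    ring, Complex.exp_sub, Complex.exp_two_pi_mul_I, Complex.exp_pi_div_two_mul_I, div_one]

/-- Let `C(R) = υ√(Rr)`, `N(R) = [[−C(R), B(R)], [B(R), C(R)]]`,
`A = (3πi/2)·I`, `T = [[0,1],[1,0]]`, and `M(R) = T · exp(−(A + N(R)))`, where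
`B(R)·(Rr)^{1/4}·e^{8√(Rr)} → i√π` as `R → ∞` and `0 < υ ≤ 8`. Then the diagonal
entries of `M(R)` tend to `0`, `M(R)₁₂·e^{υ√(Rr)} → i` and `M(R)₂₁·e^{−υ√(Rr)} → i`. -/
theorem stmt13 (r : ℝ) (hr : 0 < r) (υ : ℝ) (hυ0 : 0 < υ) (hυ8 : υ ≤ 8)
    (B : ℝ → ℂ)
    (hB : Tendsto
      (fun R : ℝ => B R * ((R * r) ^ ((1 : ℝ) / 4) : ℝ) * Real.exp (8 * Real.sqrt (R * r)))
      atTop (nhds (Complex.I * (Real.sqrt Real.pi : ℂ))))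
    (M : ℝ → Matrix (Fin 2) (Fin 2) ℂ)
    (hM : ∀ R : ℝ, M R =
      !![0, 1; 1, 0] *
        NormedSpace.exp
          (-(((3 * (Real.pi : ℂ) * Complex.I / 2) • (1 : Matrix (Fin 2) (Fin 2) ℂ)) +
            !![-((υ * Real.sqrt (R * r) : ℝ) : ℂ), B R;
               B R, ((υ * Real.sqrt (R * r) : ℝ) : ℂ)]))) :
    Tendsto (fun R : ℝ => M R 0 0) atTop (nhds 0) ∧
    Tendsto (fun R : ℝ => M R 1 1) atTop (nhds 0) ∧
    Tendsto (fun R : ℝ => M R 0 1 * Real.exp (υ * Real.sqrt (R * r)))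
      atTop (nhds Complex.I) ∧
    Tendsto (fun R : ℝ => M R 1 0 * Real.exp (-(υ * Real.sqrt (R * r))))
      atTop (nhds Complex.I) := by
  have hRr : Tendsto (fun R : ℝ => R * r) atTop atTop := tendsto_id.atTop_mul_const hr
  have hc : Tendsto (fun R => υ * Real.sqrt (R * r)) atTop atTop :=
    (Real.tendsto_sqrt_atTop.comp hRr).const_mul_atTop hυ0
  have hq : Tendsto (fun R => ‖(((R * r) ^ ((1 : ℝ) / 4) : ℝ) : ℂ)‖) atTop atTop := by
    simpa only [Complex.norm_real, Real.norm_eq_abs, Function.comp_def] using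
      tendsto_abs_atTop_atTop.comp ((tendsto_rpow_atTop (by norm_num)).comp hRr)
  have hB8 : Tendsto (fun R => ‖B R‖ * Real.exp (8 * Real.sqrt (R * r))) atTop (𝓝 0) := by
    simpa [Complex.norm_exp] using (tendsto_zero_of_tendsto_mul_of_tendsto_norm_atTop
      (hB.congr fun R => mul_right_comm _ _ _) hq).norm
  have hb : Tendsto (fun R => ‖B R‖ * Real.exp (υ * Real.sqrt (R * r))) atTop (𝓝 0) :=
    squeeze_zero (fun R => by positivity) (fun R => by gcongr) hB8
  simpa only [Complex.exp_neg_three_pi_mul_I_div_two] using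
    tendsto_swap_mul_exp_neg_entries _ hc hb hM
end
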